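/- Let R be a commutative Noetherian ring which is a unique factorization domain, and let 0 → A → B → C → 0 be a short exact sequence of finitely generated R-modules. If Δ_0(C) is a unit of R, then for every i ≥ 0 the characteristic polynomial Δ_i(A) is associated (equal up to multiplication by a unit of R) to Δ_i(B). -/

import Mathlib

open Matrix LinearMap

/-- The ideal of `R` generated by the `k × k` minors of the matrix `M`.
(If `k = 0` this is all of `R`; if `k` exceeds the number of columns it is `0`.) -/
def minorsIdeal {R : Type*} [CommRing R] {n m : ℕ} (M : Matrix (Fin n) (Fin m) R)
    (k : ℕ) : Ideal R :=
  Ideal.span { x | ∃ (r : Fin k → Fin n) (c : Fin k → Fin m), x = (M.submatrix r c).det }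

/-- The `i`-th elementary (Fitting) ideal of a module presented by the `n × m` matrix `M`:
the ideal generated by the `(n - i) × (n - i)` minors of `M`. -/
def elemIdeal {R : Type*} [CommRing R] {n m : ℕ} (M : Matrix (Fin n) (Fin m) R)
    (i : ℕ) : Ideal R :=
  minorsIdeal M (n - i)

/-- `d` is a greatest common divisor of the elements of the ideal `I`. -/
def IsGCDOfIdeal {R : Type*} [CommRing R] (d : R) (I : Ideal R) : Prop :=
  (∀ x ∈ I, d ∣ x) ∧ ∀ e : R, (∀ x ∈ I, e ∣ x) → e ∣ d

/-!
Present `B` by a block matrix `[[MA, Y], [0, MC]]` built from the presentations of `A` and `C`.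
Elementary ideals do not depend on the presentation (two presentations of `B` have stabilisations
`[[M, -V], [0, 1]]` with the same column space up to reordering rows), so `E_i(B)` is generated by
the `(na + nc - i)`-minors of the block matrix. The product of an `(na - i)`-minor `μ` of `MA` and
a maximal minor `ν` of `MC` is such a minor, so `Δ_i(B) ∣ μ ν`. Conversely, there is `Q` with
`MC * Q = ν • 1`, and this turns `ν ^ na` times the block matrix into a product with a factor
`[[MA, 0], [0, 1]]`, so a power of `ν` times any minor of `E_i(B)` lies in `E_i(A)`. As `Δ_0(C)`
is a unit, the maximal minors `ν` have no common prime factor, and in a UFD they cancel from both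
divisibilities.
-/

theorem Sum.exists_eq_comp_inl {ι α β : Type*} {r : ι → α ⊕ β}
    (h : ∀ i b, r i ≠ Sum.inr b) : ∃ r' : ι → α, r = Sum.inl ∘ r' := by
  have hl : ∀ i, ∃ a, r i = Sum.inl a := fun i => by
    rcases hi : r i with a | b
    exacts [⟨a, rfl⟩, (h i b hi).elim]
  choose r' hr' using hl
  exact ⟨r', funext hr'⟩

namespace Matrix

variable {R : Type*} [CommRing R] {l m n o m' n' : Type*}

def minors (M : Matrix m n R) (k : ℕ) : Ideal R :=
  Ideal.span {x | ∃ (r : Fin k → m) (c : Fin k → n), x = (M.submatrix r c).det}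

theorem _root_.elemIdeal_eq_minors {k l : ℕ} (M : Matrix (Fin k) (Fin l) R) (i : ℕ) :
    elemIdeal M i = M.minors (k - i) :=
  rfl

theorem det_submatrix_mem_minors (M : Matrix m n R) {k : ℕ} (r : Fin k → m) (c : Fin k → n) :
    (M.submatrix r c).det ∈ M.minors k :=
  Ideal.subset_span ⟨r, c, rfl⟩

theorem minors_zero (M : Matrix m n R) : M.minors 0 = ⊤ := by
  rw [Ideal.eq_top_iff_one, ← det_isEmpty (A := M.submatrix Fin.elim0 Fin.elim0)]
  exact det_submatrix_mem_minors M _ _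

theorem minors_submatrix_le (M : Matrix m n R) (r : m' → m) (c : n' → n) (k : ℕ) :
    (M.submatrix r c).minors k ≤ M.minors k := by
  rw [minors, Ideal.span_le]
  rintro _ ⟨r', c', rfl⟩
  exact det_submatrix_mem_minors M (r ∘ r') (c ∘ c')

theorem minors_submatrix_equiv (M : Matrix m n R) (e : m' ≃ m) (f : n' ≃ n) (k : ℕ) :
    (M.submatrix e f).minors k = M.minors k := by
  refine (minors_submatrix_le M e f k).antisymm ?_
  simpa using minors_submatrix_le (M.submatrix e f) e.symm f.symm k

theorem minors_transpose_le (M : Matrix m n R) (k : ℕ) : Mᵀ.minors k ≤ M.minors k := by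
  rw [minors, Ideal.span_le]
  rintro _ ⟨r, c, rfl⟩
  rw [← transpose_submatrix, det_transpose]
  exact det_submatrix_mem_minors M c r

theorem minors_transpose (M : Matrix m n R) (k : ℕ) : Mᵀ.minors k = M.minors k :=
  (minors_transpose_le M k).antisymm (by simpa using minors_transpose_le Mᵀ k)

theorem minors_antitone (M : Matrix m n R) : Antitone M.minors := by
  refine antitone_nat_of_succ_le fun k => ?_
  rw [minors, Ideal.span_le]
  rintro _ ⟨r, c, rfl⟩
  rw [det_succ_row_zero]
  refine Ideal.sum_mem _ fun j _ => Ideal.mul_mem_left _ _ ?_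
  rw [submatrix_submatrix]
  exact det_submatrix_mem_minors M _ _

theorem det_mul_eq_sum_det_submatrix [Fintype l] {k : ℕ} (A : Matrix (Fin k) l R)
    (B : Matrix l (Fin k) R) :
    (A * B).det = ∑ f : Fin k → l, (∏ i, A i (f i)) * (B.submatrix f _root_.id).det := by
  have hrows : (A * B).det = detRowAlternating (fun i => ∑ x, A i x • B x) := by
    congr 1
    ext i j
    simp [mul_apply, Finset.sum_apply]
  rw [hrows, ← AlternatingMap.coe_multilinearMap, MultilinearMap.map_sum]
  refine Finset.sum_congr rfl fun f _ => ?_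
  exact (detRowAlternating.toMultilinearMap.map_smul_univ (fun i => A i (f i)) _)

theorem minors_mul_le_right [Fintype l] (P : Matrix m l R) (Q : Matrix l n R) (k : ℕ) :
    (P * Q).minors k ≤ Q.minors k := by
  rw [minors, Ideal.span_le]
  rintro _ ⟨r, c, rfl⟩
  rw [submatrix_mul _ _ r (Equiv.refl l) c (Equiv.bijective _), det_mul_eq_sum_det_submatrix]
  refine Ideal.sum_mem _ fun f _ => Ideal.mul_mem_left _ _ ?_
  exact det_submatrix_mem_minors Q _ _

theorem minors_mul_le_left [Fintype l] (P : Matrix m l R) (Q : Matrix l n R) (k : ℕ) :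
    (P * Q).minors k ≤ P.minors k := by
  simpa only [← minors_transpose (P * Q), transpose_mul, minors_transpose] using
    minors_mul_le_right Qᵀ Pᵀ k

theorem minors_mul_of_isUnit_det [Fintype m] [DecidableEq m] {P : Matrix m m R}
    (hP : IsUnit P.det) (Q : Matrix m n R) (k : ℕ) : (P * Q).minors k = Q.minors k := by
  refine (minors_mul_le_right P Q k).antisymm ?_
  simpa [← Matrix.mul_assoc, nonsing_inv_mul P hP] using minors_mul_le_right P⁻¹ (P * Q) k

theorem exists_comp_mulVecLin_eq {N : Type*} [AddCommGroup N] [Module R N] [Fintype n]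
    [Fintype o] [DecidableEq o] {u : (n → R) →ₗ[R] N} {v : (o → R) →ₗ[R] N}
    (h : range v ≤ range u) : ∃ V : Matrix n o R, u ∘ₗ V.mulVecLin = v := by
  obtain ⟨w, hw⟩ := Module.projective_lifting_property u.rangeRestrict
    (v.codRestrict _ fun x => h ⟨x, rfl⟩) u.surjective_rangeRestrict
  refine ⟨LinearMap.toMatrix' w, ?_⟩
  rw [← toLin'_apply', toLin'_toMatrix']
  exact LinearMap.ext fun x => congrArg Subtype.val (LinearMap.congr_fun hw x)

theorem exists_eq_mul_of_range_le [Fintype m] [Fintype n] [DecidableEq n] {A : Matrix l m R}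
    {T : Matrix l n R} (h : range T.mulVecLin ≤ range A.mulVecLin) :
    ∃ Z : Matrix m n R, T = A * Z := by
  obtain ⟨Z, hZ⟩ := exists_comp_mulVecLin_eq h
  refine ⟨Z, toLin'.injective ?_⟩
  rw [toLin'_apply', toLin'_apply', mulVecLin_mul, hZ]

theorem minors_le_of_range_le [Fintype m] [Fintype n] {M₁ : Matrix l m R} {M₂ : Matrix l n R}
    (h : range M₁.mulVecLin ≤ range M₂.mulVecLin) (k : ℕ) : M₁.minors k ≤ M₂.minors k := by
  classical
  obtain ⟨Z, rfl⟩ := exists_eq_mul_of_range_le h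
  exact minors_mul_le_left M₂ Z k

theorem minors_eq_of_range_eq [Fintype m] [Fintype n] {M₁ : Matrix l m R} {M₂ : Matrix l n R}
    (h : range M₁.mulVecLin = range M₂.mulVecLin) (k : ℕ) : M₁.minors k = M₂.minors k :=
  (minors_le_of_range_le h.le k).antisymm (minors_le_of_range_le h.ge k)

theorem det_submatrix_mem_minors_card {ι : Type*} [Fintype ι] [DecidableEq ι]
    (M : Matrix m n R) (r : ι → m) (c : ι → n) :
    (M.submatrix r c).det ∈ M.minors (Fintype.card ι) := by
  rw [← det_submatrix_equiv_self (Fintype.equivFin ι).symm, submatrix_submatrix]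
  exact det_submatrix_mem_minors M _ _

theorem det_submatrix_eq_zero_of_not_injective_left (M : Matrix m n R) {k : ℕ} {r : Fin k → m}
    (hr : ¬ r.Injective) (c : Fin k → n) : (M.submatrix r c).det = 0 := by
  obtain ⟨i, j, hij, hne⟩ := Function.not_injective_iff.mp hr
  exact det_zero_of_row_eq hne (by ext; simp [hij])

theorem det_submatrix_eq_zero_of_not_injective_right (M : Matrix m n R) {k : ℕ}
    (r : Fin k → m) {c : Fin k → n} (hc : ¬ c.Injective) : (M.submatrix r c).det = 0 := by
  rw [← det_transpose, transpose_submatrix]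
  exact det_submatrix_eq_zero_of_not_injective_left Mᵀ hc r

theorem minors_fromBlocks_one_unit_le (M : Matrix m n R) (k : ℕ) :
    (fromBlocks M 0 0 (1 : Matrix Unit Unit R)).minors k ≤ M.minors (k - 1) := by
  rcases k with _ | k
  · simp [minors_zero]
  rw [minors, Ideal.span_le]
  rintro _ ⟨r, c, rfl⟩
  by_cases hr : r.Injective
  swap
  · simp [det_submatrix_eq_zero_of_not_injective_left _ hr]
  by_cases hc : c.Injective
  swap
  · simp [det_submatrix_eq_zero_of_not_injective_right _ _ hc]
  by_cases hrow : ∃ i₀, r i₀ = Sum.inr ()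
  · obtain ⟨i₀, hi₀⟩ := hrow
    obtain ⟨r', hr'⟩ : ∃ r', r ∘ i₀.succAbove = Sum.inl ∘ r' :=
      Sum.exists_eq_comp_inl fun i _ h => Fin.succAbove_ne i₀ i (hr (h.trans hi₀.symm))
    rw [det_succ_row _ i₀]
    refine Ideal.sum_mem _ fun j _ => ?_
    rcases hj : c j with b | ⟨⟩
    · simp [hi₀, hj]
    obtain ⟨c', hc'⟩ : ∃ c', c ∘ j.succAbove = Sum.inl ∘ c' :=
      Sum.exists_eq_comp_inl fun i _ h => Fin.succAbove_ne j i (hc (h.trans hj.symm))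
    refine Ideal.mul_mem_left _ _ ?_
    rw [submatrix_submatrix, hr', hc']
    exact det_submatrix_mem_minors M r' c'
  · obtain ⟨r', rfl⟩ := Sum.exists_eq_comp_inl fun i u h => hrow ⟨i, h⟩
    by_cases hcol : ∃ j₀, c j₀ = Sum.inr ()
    · obtain ⟨j₀, hj₀⟩ := hcol
      rw [det_eq_zero_of_column_eq_zero j₀ fun i => by simp [hj₀]]
      exact zero_mem _
    · obtain ⟨c', rfl⟩ := Sum.exists_eq_comp_inl fun j u h => hcol ⟨j, h⟩
      exact minors_antitone M k.le_succ (det_submatrix_mem_minors M r' c')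

theorem minors_fromBlocks_one_le [Fintype o] [DecidableEq o] (M : Matrix m n R) (k : ℕ) :
    (fromBlocks M 0 0 (1 : Matrix o o R)).minors k ≤ M.minors (k - Fintype.card o) := by
  revert k
  refine Fintype.induction_empty_option (P := fun o _ => ∀ [DecidableEq o] (k : ℕ),
    (fromBlocks M 0 0 (1 : Matrix o o R)).minors k ≤ M.minors (k - Fintype.card o))
    ?_ ?_ ?_ o
  · intro α β _ e ih _ k
    classical
    let : Fintype α := Fintype.ofEquiv β e.symm
    have hsub : (fromBlocks M 0 0 (1 : Matrix β β R)).submatrix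
        ((Equiv.refl m).sumCongr e) ((Equiv.refl n).sumCongr e) = fromBlocks M 0 0 1 := by
      ext (i | i) (j | j) <;> simp [one_apply]
    rw [← minors_submatrix_equiv _ ((Equiv.refl m).sumCongr e) ((Equiv.refl n).sumCongr e),
      hsub, ← Fintype.card_congr e]
    exact ih k
  · intro _ k
    have hsub : (fromBlocks M 0 0 (1 : Matrix PEmpty PEmpty R)).submatrix
        (Equiv.sumEmpty m PEmpty).symm (Equiv.sumEmpty n PEmpty).symm = M := by
      ext i j; simp
    rw [← minors_submatrix_equiv _ _ (Equiv.sumEmpty n PEmpty).symm, hsub]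
    simp
  · intro α _ ih _ k
    classical
    let em : (m ⊕ α) ⊕ Unit ≃ m ⊕ Option α :=
      (Equiv.sumAssoc m α Unit).trans ((Equiv.refl m).sumCongr (Equiv.optionEquivSumPUnit α).symm)
    let en : (n ⊕ α) ⊕ Unit ≃ n ⊕ Option α :=
      (Equiv.sumAssoc n α Unit).trans ((Equiv.refl n).sumCongr (Equiv.optionEquivSumPUnit α).symm)
    have hsub : (fromBlocks M 0 0 (1 : Matrix (Option α) (Option α) R)).submatrix em en =
        fromBlocks (fromBlocks M 0 0 1) 0 0 1 := by
      ext ((i | i) | i) ((j | j) | j) <;> simp [em, en, one_apply]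
    rw [← minors_submatrix_equiv _ em en, hsub, Fintype.card_option, add_comm, ← Nat.sub_sub]
    exact (minors_fromBlocks_one_unit_le _ k).trans (ih (k - 1))

theorem det_fromBlocks_submatrix_sum_map_mem_minors {m' n' p q : Type*} [Fintype p]
    [DecidableEq p] [Fintype q] [DecidableEq q] (A : Matrix m n R) (B : Matrix m n' R)
    (D : Matrix m' n' R) (r : p → m) (c : p → n) (r' : q → m') (c' : q → n') :
    (A.submatrix r c).det * (D.submatrix r' c').det ∈
      (fromBlocks A B 0 D).minors (Fintype.card p + Fintype.card q) := by
  rw [← det_fromBlocks_zero₂₁ _ (B.submatrix r c'), ← Fintype.card_sum]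
  convert det_submatrix_mem_minors_card (fromBlocks A B 0 D) (Sum.map r r') (Sum.map c c')
    using 2
  ext (i | i) (j | j) <;> simp

theorem minors_fromBlocks_one [Fintype m] [DecidableEq m] [Fintype o] [DecidableEq o]
    (M : Matrix m n R) (W : Matrix m o R) (k : ℕ) :
    (fromBlocks M W 0 (1 : Matrix o o R)).minors k = M.minors (k - Fintype.card o) := by
  apply le_antisymm
  · have hW : fromBlocks M W 0 (1 : Matrix o o R) =
        (fromBlocks 1 W 0 1 : Matrix (m ⊕ o) (m ⊕ o) R) *
          (fromBlocks M 0 0 1 : Matrix (m ⊕ o) (n ⊕ o) R) := by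
      simp [fromBlocks_multiply]
    rw [hW, minors_mul_of_isUnit_det (by simp)]
    exact minors_fromBlocks_one_le M k
  · refine (Ideal.span_le.mpr ?_).trans
      (minors_antitone _ (show k ≤ k - Fintype.card o + Fintype.card o by omega))
    rintro _ ⟨r, c, rfl⟩
    simpa using det_fromBlocks_submatrix_sum_map_mem_minors M W 1 r c _root_.id _root_.id

theorem minors_mul_minors_le_fromBlocks (A : Matrix m n R) (B : Matrix m n' R)
    (D : Matrix m' n' R) (a d : ℕ) :
    A.minors a * D.minors d ≤ (fromBlocks A B 0 D).minors (a + d) := by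
  rw [minors, minors, Ideal.span_mul_span', Ideal.span_le]
  rintro _ ⟨_, ⟨r, c, rfl⟩, _, ⟨r', c', rfl⟩, rfl⟩
  simpa using det_fromBlocks_submatrix_sum_map_mem_minors A B D r c r' c'

theorem minors_eq_span_det_submatrix_id {k : ℕ} (M : Matrix (Fin k) m R) :
    M.minors k = Ideal.span (Set.range fun c : Fin k → m => (M.submatrix _root_.id c).det) := by
  refine le_antisymm (Ideal.span_le.mpr ?_) (Ideal.span_le.mpr ?_)
  · rintro _ ⟨r, c, rfl⟩
    by_cases hr : r.Injective
    · let σ : Equiv.Perm (Fin k) := Equiv.ofBijective r (Finite.injective_iff_bijective.mp hr)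
      rw [show M.submatrix r c = (M.submatrix _root_.id c).submatrix σ _root_.id from rfl,
        det_permute]
      exact Ideal.mul_mem_left _ _ (Ideal.subset_span ⟨c, rfl⟩)
    · simp [det_submatrix_eq_zero_of_not_injective_left M hr]
  · rintro _ ⟨c, rfl⟩
    exact det_submatrix_mem_minors M _ c

theorem pow_mul_mem_minors_smul (M : Matrix m n R) (c : R) {k : ℕ} {x : R}
    (hx : x ∈ M.minors k) : c ^ k * x ∈ (c • M).minors k := by
  suffices h : M.minors k ≤ Submodule.comap (LinearMap.mulLeft R (c ^ k)) ((c • M).minors k) from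
    h hx
  refine Ideal.span_le.mpr ?_
  rintro _ ⟨r, c', rfl⟩
  have h := det_submatrix_mem_minors (c • M) r c'
  rwa [show (c • M).submatrix r c' = c • M.submatrix r c' from rfl, det_smul,
    Fintype.card_fin] at h

theorem exists_mul_eq_det_submatrix_smul_one {δ : Type*} [Fintype o] [DecidableEq o] [Fintype δ]
    [DecidableEq δ] (D : Matrix o δ R) (c : o → δ) :
    ∃ Q : Matrix δ o R, D * Q = (D.submatrix _root_.id c).det • 1 := by
  refine ⟨(1 : Matrix δ δ R).submatrix _root_.id c * adjugate (D.submatrix _root_.id c), ?_⟩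
  have hsel : D * (1 : Matrix δ δ R).submatrix _root_.id c = D.submatrix _root_.id c := by
    ext i j
    simp [mul_apply, one_apply]
  rw [← Matrix.mul_assoc, hsel, mul_adjugate]

section BlockPresentation

variable {α γ δ : Type*} [Fintype γ] [Fintype δ] [DecidableEq δ] [Fintype o] [DecidableEq o]
  {A : Matrix α γ R} {Y : Matrix α δ R} {D : Matrix o δ R}

theorem exists_smul_sub_eq_mul_of_mul_eq_smul_one
    (hP : ∀ z : α → R, Sum.elim z 0 ∈ range (fromBlocks A Y 0 D).mulVecLin →
      z ∈ range A.mulVecLin)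
    {Q : Matrix δ o R} {ν : R} (hQ : D * Q = ν • 1) :
    ∃ Z : Matrix γ δ R, ν • Y - Y * Q * D = A * Z := by
  refine exists_eq_mul_of_range_le ?_
  rintro _ ⟨v, rfl⟩
  refine hP _ ⟨Sum.elim 0 ((ν • 1 - Q * D) *ᵥ v), ?_⟩
  have hD : D * (ν • 1 - Q * D) = 0 := by
    rw [Matrix.mul_sub, ← Matrix.mul_assoc, hQ, Matrix.mul_smul, smul_mul, Matrix.mul_one,
      Matrix.one_mul, sub_self]
  rw [mulVecLin_apply, mulVecLin_apply, fromBlocks_mulVec]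
  simp only [Sum.elim_comp_inl, Sum.elim_comp_inr, mulVec_zero, zero_add, mulVec_mulVec, hD,
    zero_mulVec, Matrix.mul_sub, Matrix.mul_smul, Matrix.mul_one, Matrix.mul_assoc]

theorem minors_pow_smul_fromBlocks_le [Fintype α] [DecidableEq α] [DecidableEq γ]
    (hP : ∀ z : α → R, Sum.elim z 0 ∈ range (fromBlocks A Y 0 D).mulVecLin →
      z ∈ range A.mulVecLin)
    {Q : Matrix δ o R} {ν : R} (hQ : D * Q = ν • 1) (k : ℕ) :
    ((ν ^ Fintype.card α) • fromBlocks A Y 0 D).minors k ≤ A.minors (k - Fintype.card o) := by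
  obtain ⟨Z, hZ⟩ := exists_smul_sub_eq_mul_of_mul_eq_smul_one hP hQ
  let L : Matrix (α ⊕ o) (α ⊕ o) R := fromBlocks (ν • 1) (-(Y * Q)) 0 1
  let G : Matrix (α ⊕ o) (γ ⊕ o) R := fromBlocks A 0 0 1
  let H : Matrix (γ ⊕ o) (γ ⊕ δ) R := fromBlocks (ν • 1) Z 0 D
  have hL : L * fromBlocks A Y 0 D = G * H := by
    simp [L, G, H, fromBlocks_multiply, ← hZ, sub_eq_add_neg, Matrix.mul_assoc]
  have hdet : L.det = ν ^ Fintype.card α := by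
    simp [L]
  have hsmul : (ν ^ Fintype.card α) • fromBlocks A Y 0 D =
      L.adjugate * (G * H) := by
    rw [← hL, ← Matrix.mul_assoc, adjugate_mul, hdet, smul_mul, Matrix.one_mul]
  rw [hsmul, ← minors_fromBlocks_one A 0 k]
  exact (minors_mul_le_right _ _ k).trans (minors_mul_le_left _ _ k)

end BlockPresentation

end Matrix

section Presentation

variable {R : Type*} [CommRing R] {N : Type*} [AddCommGroup N] [Module R N]

def LinearMap.sumElim {α β : Type*} (u : (α → R) →ₗ[R] N) (v : (β → R) →ₗ[R] N) :
    (α ⊕ β → R) →ₗ[R] N :=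
  u ∘ₗ funLeft R R Sum.inl + v ∘ₗ funLeft R R Sum.inr

@[simp]
theorem LinearMap.sumElim_apply {α β : Type*} (u : (α → R) →ₗ[R] N) (v : (β → R) →ₗ[R] N)
    (x : α ⊕ β → R) : u.sumElim v x = u (x ∘ Sum.inl) + v (x ∘ Sum.inr) :=
  rfl

theorem LinearMap.ker_sumElim_eq_range_fromBlocks {α β γ δ : Type*} [Fintype γ] [Fintype δ]
    {u : (α → R) →ₗ[R] N} {v : (β → R) →ₗ[R] N} {A : Matrix α γ R} {B : Matrix α δ R}
    {D : Matrix β δ R} (hA : ker u = range A.mulVecLin)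
    (hD : (range u).comap v = range D.mulVecLin) (hB : u ∘ₗ B.mulVecLin = -(v ∘ₗ D.mulVecLin)) :
    ker (u.sumElim v) = range (fromBlocks A B 0 D).mulVecLin := by
  have hBD : ∀ z, u (B *ᵥ z) + v (D *ᵥ z) = 0 := fun z => by
    simpa [add_eq_zero_iff_eq_neg] using LinearMap.congr_fun hB z
  ext x
  simp only [mem_ker, sumElim_apply, mem_range, mulVecLin_apply]
  constructor
  · intro hx
    obtain ⟨z, hz⟩ : x ∘ Sum.inr ∈ range D.mulVecLin := by
      rw [← hD]
      exact ⟨-(x ∘ Sum.inl), by rw [map_neg, neg_eq_iff_add_eq_zero, hx]⟩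
    rw [mulVecLin_apply] at hz
    obtain ⟨a, ha⟩ : x ∘ Sum.inl - B *ᵥ z ∈ range A.mulVecLin := by
      have hBz : u (B *ᵥ z) = -v (x ∘ Sum.inr) := by
        rw [← hz]
        exact eq_neg_of_add_eq_zero_left (hBD z)
      rw [← hA, mem_ker, map_sub, hBz, sub_neg_eq_add, hx]
    rw [mulVecLin_apply, eq_sub_iff_add_eq] at ha
    refine ⟨Sum.elim a z, ?_⟩
    ext (i | i)
    · simpa [fromBlocks_mulVec] using congrFun ha i
    · simpa [fromBlocks_mulVec] using congrFun hz i
  · rintro ⟨y, rfl⟩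
    have hAy : u (A *ᵥ (y ∘ Sum.inl)) = 0 := by
      rw [← mem_ker, hA]
      exact ⟨_, rfl⟩
    simp [fromBlocks_mulVec, hAy, hBD]

end Presentation

namespace Matrix

variable {R : Type*} [CommRing R] {N : Type*} [AddCommGroup N] [Module R N]

def IsPresentation {n m : Type*} [Fintype m] (M : Matrix n m R) (p : (n → R) →ₗ[R] N) : Prop :=
  Function.Surjective p ∧ ker p = range M.mulVecLin

theorem IsPresentation.ker_sumElim {n₁ m₁ n₂ : Type*} [Fintype m₁] [Fintype n₂]
    [DecidableEq n₂] {M : Matrix n₁ m₁ R} {p : (n₁ → R) →ₗ[R] N}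
    (h : M.IsPresentation p) {v : (n₂ → R) →ₗ[R] N} {V : Matrix n₁ n₂ R}
    (hV : p ∘ₗ V.mulVecLin = v) : ker (p.sumElim v) = range (fromBlocks M (-V) 0 1).mulVecLin :=
  ker_sumElim_eq_range_fromBlocks h.2 (by simp [range_eq_top.mpr h.1])
    (by ext; simp [← hV])

theorem IsPresentation.minors_eq {n₁ m₁ n₂ m₂ : Type*} [Fintype n₁] [DecidableEq n₁]
    [Fintype m₁] [Fintype n₂] [DecidableEq n₂] [Fintype m₂] {M₁ : Matrix n₁ m₁ R}
    {p₁ : (n₁ → R) →ₗ[R] N} {M₂ : Matrix n₂ m₂ R} {p₂ : (n₂ → R) →ₗ[R] N}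
    (h₁ : M₁.IsPresentation p₁) (h₂ : M₂.IsPresentation p₂) (i : ℕ) :
    M₁.minors (Fintype.card n₁ - i) = M₂.minors (Fintype.card n₂ - i) := by
  obtain ⟨V, hV⟩ := exists_comp_mulVecLin_eq (u := p₁) (v := p₂) <| by
    simp [range_eq_top.mpr h₁.1]
  obtain ⟨W, hW⟩ := exists_comp_mulVecLin_eq (u := p₂) (v := p₁) <| by
    simp [range_eq_top.mpr h₂.1]
  set K₁ := fromBlocks M₁ (-V) 0 (1 : Matrix n₂ n₂ R)
  set K₂ := fromBlocks M₂ (-W) 0 (1 : Matrix n₁ n₁ R)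
  have hK : range (K₂.submatrix (Equiv.sumComm n₁ n₂) (Equiv.refl _)).mulVecLin =
      range K₁.mulVecLin := by
    rw [← h₁.ker_sumElim hV]
    ext x
    have hswap : x ∈ range (K₂.submatrix (Equiv.sumComm n₁ n₂) (Equiv.refl _)).mulVecLin ↔
        x ∘ Sum.swap ∈ range K₂.mulVecLin := by
      simp only [mem_range, mulVecLin_apply, submatrix_mulVec_equiv]
      refine exists_congr fun y => ⟨?_, fun h => ?_⟩
      · rintro rfl
        ext (i | i) <;> rfl
      · ext (i | i) <;> simp [h]
    rw [hswap, ← h₂.ker_sumElim hW, mem_ker, mem_ker, sumElim_apply, sumElim_apply, add_comm]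
    rfl
  calc M₁.minors (Fintype.card n₁ - i)
      = K₁.minors (Fintype.card n₁ + Fintype.card n₂ - i) := by
        rw [minors_fromBlocks_one]
        congr 1
        omega
    _ = K₂.minors (Fintype.card n₁ + Fintype.card n₂ - i) := by
        rw [← minors_eq_of_range_eq hK, minors_submatrix_equiv]
    _ = M₂.minors (Fintype.card n₂ - i) := by
        rw [minors_fromBlocks_one]
        congr 1
        omega

theorem exists_isPresentation_fromBlocks {A B C : Type*} [AddCommGroup A] [Module R A]
    [AddCommGroup B] [Module R B] [AddCommGroup C] [Module R C] {f : A →ₗ[R] B}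
    {g : B →ₗ[R] C} (hf : Function.Injective f) (hg : Function.Surjective g)
    (hexact : ker g = range f) {αA γA αC γC : Type*} [Fintype αA] [Fintype γA] [Fintype αC]
    [Fintype γC] [DecidableEq γC] {MA : Matrix αA γA R}
    {pA : (αA → R) →ₗ[R] A} {MC : Matrix αC γC R} {pC : (αC → R) →ₗ[R] C}
    (hA : MA.IsPresentation pA) (hC : MC.IsPresentation pC) :
    ∃ (Y : Matrix αA γC R) (p : (αA ⊕ αC → R) →ₗ[R] B),
      (fromBlocks MA Y 0 MC).IsPresentation p ∧
      ∀ z : αA → R, Sum.elim z 0 ∈ range (fromBlocks MA Y 0 MC).mulVecLin →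
        z ∈ range MA.mulVecLin := by
  obtain ⟨ℓ, hℓ⟩ := Module.projective_lifting_property g pC hg
  have hrange : range (f ∘ₗ pA) = ker g := by
    rw [range_comp_of_range_eq_top _ (range_eq_top.mpr hA.1), hexact]
  have hMC : ∀ y, pC (MC *ᵥ y) = 0 := fun y => by
    rw [← mem_ker, hC.2]
    exact ⟨y, rfl⟩
  obtain ⟨Y, hY⟩ := exists_comp_mulVecLin_eq (u := f ∘ₗ pA) (v := -(ℓ ∘ₗ MC.mulVecLin)) <| by
    rintro _ ⟨y, rfl⟩
    simp [hrange, ← LinearMap.comp_apply g ℓ, hℓ, hMC]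
  have hker : ker ((f ∘ₗ pA).sumElim ℓ) = range (fromBlocks MA Y 0 MC).mulVecLin :=
    ker_sumElim_eq_range_fromBlocks
      (by rw [ker_comp_of_ker_eq_bot _ (ker_eq_bot_of_injective hf), hA.2])
      (by rw [hrange, ← ker_comp, hℓ, hC.2]) hY
  refine ⟨Y, _, ⟨fun b => ?_, hker⟩, fun z hz => ?_⟩
  · obtain ⟨y, hy⟩ := hC.1 (g b)
    obtain ⟨x, hx⟩ : b - ℓ y ∈ range (f ∘ₗ pA) := by
      rw [hrange, mem_ker, map_sub, ← LinearMap.comp_apply g ℓ, hℓ, hy, sub_self]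
    exact ⟨Sum.elim x y, by simp [hx]⟩
  · rw [← hA.2, mem_ker]
    rw [← hker, mem_ker] at hz
    exact hf (by simpa using hz)

end Matrix

theorem dvd_of_forall_dvd_mul_pow {R : Type*} [CommRing R] [IsDomain R]
    [UniqueFactorizationMonoid R] {ι : Type*} {ν : ι → R}
    (hν : ∀ d, (∀ j, d ∣ ν j) → IsUnit d) (N : ℕ) {e x : R} (h : ∀ j, e ∣ x * ν j ^ N) :
    e ∣ x := by
  induction e using UniqueFactorizationMonoid.induction_on_prime generalizing x with
  | h₁ =>
    rw [zero_dvd_iff]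
    by_contra hx
    refine not_isUnit_zero (hν 0 fun j => zero_dvd_iff.mpr ?_)
    exact eq_zero_of_pow_eq_zero ((mul_eq_zero.mp (zero_dvd_iff.mp (h j))).resolve_left hx)
  | h₂ u hu => exact hu.dvd
  | h₃ a p _ hp ih =>
    obtain ⟨x, rfl⟩ : p ∣ x := by
      by_contra hpx
      refine hp.not_isUnit (hν p fun j => hp.dvd_of_dvd_pow (n := N) ?_)
      exact (hp.dvd_or_dvd ((dvd_mul_right p a).trans (h j))).resolve_left hpx
    refine mul_dvd_mul_left p (ih fun j => ?_)
    rw [← mul_dvd_mul_iff_left hp.ne_zero, ← mul_assoc]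
    exact h j

theorem charPoly_eq_of_ses_of_isUnit_general
    {R : Type*} [CommRing R] [IsDomain R] [UniqueFactorizationMonoid R]
    {A B C : Type*} [AddCommGroup A] [Module R A]
    [AddCommGroup B] [Module R B]
    [AddCommGroup C] [Module R C]
    (f : A →ₗ[R] B) (g : B →ₗ[R] C)
    (hf : Function.Injective f) (hg : Function.Surjective g)
    (hexact : LinearMap.ker g = LinearMap.range f)
    {na ma nb mb nc mc : ℕ}
    (MA : Matrix (Fin na) (Fin ma) R) (pA : (Fin na → R) →ₗ[R] A)
    (hpA : Function.Surjective pA)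
    (hkerA : LinearMap.ker pA = LinearMap.range MA.mulVecLin)
    (MB : Matrix (Fin nb) (Fin mb) R) (pB : (Fin nb → R) →ₗ[R] B)
    (hpB : Function.Surjective pB)
    (hkerB : LinearMap.ker pB = LinearMap.range MB.mulVecLin)
    (MC : Matrix (Fin nc) (Fin mc) R) (pC : (Fin nc → R) →ₗ[R] C)
    (hpC : Function.Surjective pC)
    (hkerC : LinearMap.ker pC = LinearMap.range MC.mulVecLin)
    (dC0 : R) (hdC0 : IsGCDOfIdeal dC0 (elemIdeal MC 0)) (hunit : IsUnit dC0)
    (i : ℕ) (dAi dBi : R)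
    (hdAi : IsGCDOfIdeal dAi (elemIdeal MA i))
    (hdBi : IsGCDOfIdeal dBi (elemIdeal MB i)) :
    Associated dAi dBi := by
  obtain ⟨Y, p, hp, hP⟩ :=
    exists_isPresentation_fromBlocks hf hg hexact ⟨hpA, hkerA⟩ ⟨hpC, hkerC⟩
  have hEB : elemIdeal MB i = (fromBlocks MA Y 0 MC).minors (na + nc - i) := by
    rw [elemIdeal_eq_minors]
    simpa using IsPresentation.minors_eq ⟨hpB, hkerB⟩ hp i
  have hν : ∀ d, (∀ c : Fin nc → Fin mc, d ∣ (MC.submatrix _root_.id c).det) → IsUnit d := by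
    intro d hd
    have hle : elemIdeal MC 0 ≤ Ideal.span {d} := by
      rw [elemIdeal_eq_minors, Nat.sub_zero, minors_eq_span_det_submatrix_id, Ideal.span_le]
      rintro _ ⟨c, rfl⟩
      exact Ideal.mem_span_singleton.mpr (hd c)
    exact isUnit_of_dvd_unit (hdC0.2 d fun y hy => Ideal.mem_span_singleton.mp (hle hy)) hunit
  refine associated_of_dvd_dvd (hdBi.2 _ fun x hx => ?_) (hdAi.2 _ fun μ hμ => ?_)
  · rw [hEB] at hx
    refine dvd_of_forall_dvd_mul_pow hν (na * (na + nc - i)) fun c => hdAi.1 _ ?_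
    obtain ⟨Q, hQ⟩ := exists_mul_eq_det_submatrix_smul_one MC c
    have h := minors_pow_smul_fromBlocks_le hP hQ _ (pow_mul_mem_minors_smul _ _ hx)
    rwa [Fintype.card_fin, Fintype.card_fin, ← pow_mul, show na + nc - i - nc = na - i by omega,
      mul_comm] at h
  · refine dvd_of_forall_dvd_mul_pow hν 1 fun c => hdBi.1 _ ?_
    rw [hEB, pow_one]
    refine minors_antitone _ (show na + nc - i ≤ na - i + nc by omega) ?_
    exact minors_mul_minors_le_fromBlocks MA Y MC _ _
      (Ideal.mul_mem_mul hμ (det_submatrix_mem_minors MC _ _))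

/-- Over a Noetherian UFD `R`, if `0 → A → B → C → 0` is a short exact sequence of
finitely generated `R`-modules and `Δ_0(C)` is a unit, then for every `i ≥ 0` one has
`Δ_i(A) = Δ_i(B)` up to multiplication by a unit of `R`. -/
theorem charPoly_eq_of_ses_of_isUnit
    {R : Type*} [CommRing R] [IsDomain R] [IsNoetherianRing R] [UniqueFactorizationMonoid R]
    {A B C : Type*} [AddCommGroup A] [Module R A] [Module.Finite R A]
    [AddCommGroup B] [Module R B] [Module.Finite R B]
    [AddCommGroup C] [Module R C] [Module.Finite R C]
    (f : A →ₗ[R] B) (g : B →ₗ[R] C)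
    (hf : Function.Injective f) (hg : Function.Surjective g)
    (hexact : LinearMap.ker g = LinearMap.range f)
    {na ma nb mb nc mc : ℕ}
    (MA : Matrix (Fin na) (Fin ma) R) (pA : (Fin na → R) →ₗ[R] A)
    (hpA : Function.Surjective pA)
    (hkerA : LinearMap.ker pA = LinearMap.range MA.mulVecLin)
    (MB : Matrix (Fin nb) (Fin mb) R) (pB : (Fin nb → R) →ₗ[R] B)
    (hpB : Function.Surjective pB)
    (hkerB : LinearMap.ker pB = LinearMap.range MB.mulVecLin)
    (MC : Matrix (Fin nc) (Fin mc) R) (pC : (Fin nc → R) →ₗ[R] C)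
    (hpC : Function.Surjective pC)
    (hkerC : LinearMap.ker pC = LinearMap.range MC.mulVecLin)
    (dC0 : R) (hdC0 : IsGCDOfIdeal dC0 (elemIdeal MC 0)) (hunit : IsUnit dC0)
    (i : ℕ) (dAi dBi : R)
    (hdAi : IsGCDOfIdeal dAi (elemIdeal MA i))
    (hdBi : IsGCDOfIdeal dBi (elemIdeal MB i)) :
    Associated dAi dBi :=
  charPoly_eq_of_ses_of_isUnit_general f g hf hg hexact MA pA hpA hkerA MB pB hpB hkerB MC pC hpC
    hkerC dC0 hdC0 hunit i dAi dBi hdAi hdBi
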